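/- arXiv:1909.06307 — 2 statements merged into one kernel-verified Lean document; each statement's English description precedes it below -/
import Mathlib

section
/- Let k ≥ 0 be an integer and W : ℝ → ℝ be integrable on [-1,1] with vanishing moments ∫_{-1}^{1} u^v W(u) du = 0 for all 0 ≤ v ≤ k. Let β : ℝ → ℝ be k-times differentiable on [t - s, t + s] with β^{(k)} Lipschitz with constant L there. Then |∫_{-1}^{1} β(t + s·u) W(u) du| ≤ (L/k!) · s^{k+1} · ∫_{-1}^{1} |u|^{k+1} |W(u)| du. -/
/-!
Subtract the Taylor polynomial of order `k` of `β` at `t`: composed with `u ↦ t + s u` it is a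
polynomial of degree `≤ k` in `u`, so the vanishing moments kill its integral against `W`. The
remainder is bounded by `L / (k + 1)! · |s u| ^ (k + 1)`, by induction on `k`: the derivative of
the order-`k + 1` remainder of `f` is the order-`k` remainder of `f'`, and integrating a bound
`C |y - t| ^ m` on the derivative gives `C / (m + 1) · |x - t| ^ (m + 1)`.
-/

open Set MeasureTheory

section TaylorLipschitz

variable {E : Type*} [NormedAddCommGroup E] [NormedSpace ℝ E]

theorem Convex.norm_image_le_of_norm_deriv_le_pow {s : Set ℝ} (hs : Convex ℝ s)
    {G G' : ℝ → E} {t₀ x C : ℝ} {m : ℕ}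
    (hG : ∀ y ∈ s, HasDerivWithinAt G (G' y) s y) (ht₀ : t₀ ∈ s) (hG₀ : G t₀ = 0)
    (hG' : ∀ y ∈ s, ‖G' y‖ ≤ C * |y - t₀| ^ m) (hx : x ∈ s) :
    ‖G x‖ ≤ C / (m + 1) * |x - t₀| ^ (m + 1) := by
  set d := x - t₀
  have hseg : MapsTo (fun y : ℝ => t₀ + y * d) (Icc 0 1) s := fun y hy =>
    hs.add_smul_sub_mem ht₀ hx hy
  have hφ : ∀ y ∈ Icc (0 : ℝ) 1,
      HasDerivWithinAt (fun y => G (t₀ + y * d)) (d • G' (t₀ + y * d)) (Icc 0 1) y :=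
    fun y hy => (hG _ (hseg hy)).scomp y
      (((hasDerivAt_id y).mul_const d).const_add t₀ |>.hasDerivWithinAt |>.congr_deriv
        (one_mul d)) hseg
  have hB : ∀ y, HasDerivAt (fun y => C / (m + 1) * |d| ^ (m + 1) * y ^ (m + 1))
      (C * |d| ^ (m + 1) * y ^ m) y := fun y => by
    refine ((hasDerivAt_pow (m + 1) y).const_mul (C / (m + 1) * |d| ^ (m + 1))).congr_deriv ?_
    rw [Nat.add_sub_cancel]; push_cast; field_simp
  have hbound : ∀ y ∈ Ico (0 : ℝ) 1, ‖d • G' (t₀ + y * d)‖ ≤ C * |d| ^ (m + 1) * y ^ m := by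
    intro y hy
    have := hG' _ (hseg (Ico_subset_Icc_self hy))
    rw [add_sub_cancel_left, abs_mul, abs_of_nonneg hy.1, mul_pow] at this
    rw [norm_smul, Real.norm_eq_abs]
    calc |d| * ‖G' (t₀ + y * d)‖ ≤ |d| * (C * (y ^ m * |d| ^ m)) := by gcongr
      _ = C * |d| ^ (m + 1) * y ^ m := by ring
  have := image_norm_le_of_norm_deriv_right_le_deriv_boundary
    (fun y hy => (hφ y hy).continuousWithinAt)
    (fun y hy => (hφ y (Ico_subset_Icc_self hy)).mono_of_mem_nhdsWithin
      (Icc_mem_nhdsGE_of_mem hy))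
    (by simp [hG₀]) hB hbound (right_mem_Icc.2 zero_le_one)
  simpa [d] using this

theorem Convex.norm_sub_taylorWithinEval_le {s : Set ℝ} (hs : Convex ℝ s)
    (hs' : UniqueDiffOn ℝ s) {f : ℝ → E} {t₀ x L : ℝ} {k : ℕ} (hf : ContDiffOn ℝ k f s)
    (ht₀ : t₀ ∈ s)
    (hlip : ∀ y ∈ s, ‖iteratedDerivWithin k f s y - iteratedDerivWithin k f s t₀‖ ≤ L * |y - t₀|)
    (hx : x ∈ s) :
    ‖f x - taylorWithinEval f k s t₀ x‖ ≤ L / (k + 1).factorial * |x - t₀| ^ (k + 1) := by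
  induction k generalizing f x with
  | zero => simpa using hlip x hx
  | succ k ih =>
    have hf' : ContDiffOn ℝ ((k : WithTop ℕ∞) + 1) f s := mod_cast hf
    have hderiv (y : ℝ) (hy : y ∈ s) := ih ((contDiffOn_succ_iff_derivWithin hs').1 hf').2.2
      (by simpa only [← iteratedDerivWithin_succ'] using hlip) hy
    have hG : ∀ y ∈ s, HasDerivWithinAt (fun z => f z - taylorWithinEval f (k + 1) s t₀ z)
        (derivWithin f s y - taylorWithinEval (derivWithin f s) k s t₀ y) s y := fun y hy =>
      ((hf'.differentiableOn (by simp) y hy).hasDerivWithinAt).sub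
        (hasDerivAt_taylorWithinEval_succ f k).hasDerivWithinAt
    convert hs.norm_image_le_of_norm_deriv_le_pow hG ht₀ (by simp [taylorWithinEval_self])
      hderiv hx using 2
    push_cast [Nat.factorial_succ]
    field_simp

end TaylorLipschitz

section VanishingMoments

variable {W : ℝ → ℝ} {a b : ℝ} {k : ℕ}

theorem integral_sum_mul_pow_mul_eq_zero (hW : IntervalIntegrable W volume a b)
    (hmom : ∀ v : ℕ, v ≤ k → (∫ u in a..b, u ^ v * W u) = 0) (c : ℕ → ℝ) :
    ∫ u in a..b, (∑ i ∈ Finset.range (k + 1), c i * u ^ i) * W u = 0 := by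
  simp_rw [Finset.sum_mul, mul_assoc]
  rw [intervalIntegral.integral_finsetSum fun i _ =>
    (hW.continuousOn_mul (continuous_pow i).continuousOn).const_mul (c i)]
  refine Finset.sum_eq_zero fun i hi => ?_
  rw [intervalIntegral.integral_const_mul, hmom i (Finset.mem_range_succ_iff.1 hi), mul_zero]

theorem abs_integral_mul_le_of_moments_eq_zero {g : ℝ → ℝ} {M : ℝ} (c : ℕ → ℝ) (hab : a ≤ b)
    (hW : IntervalIntegrable W volume a b)
    (hmom : ∀ v : ℕ, v ≤ k → (∫ u in a..b, u ^ v * W u) = 0) (hg : ContinuousOn g (Icc a b))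
    (hgc : ∀ u ∈ Icc a b, |g u - ∑ i ∈ Finset.range (k + 1), c i * u ^ i| ≤ M * |u| ^ (k + 1)) :
    |∫ u in a..b, g u * W u| ≤ M * ∫ u in a..b, |u| ^ (k + 1) * |W u| := by
  set p : ℝ → ℝ := fun u => ∑ i ∈ Finset.range (k + 1), c i * u ^ i
  have hp : Continuous p := by fun_prop
  rw [← uIcc_of_le hab] at hg
  have hsplit : ∫ u in a..b, g u * W u = ∫ u in a..b, (g u - p u) * W u := by
    simp_rw [sub_mul]
    rw [intervalIntegral.integral_sub (hW.continuousOn_mul hg)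
      (hW.continuousOn_mul hp.continuousOn), integral_sum_mul_pow_mul_eq_zero hW hmom, sub_zero]
  rw [hsplit, ← intervalIntegral.integral_const_mul]
  refine (intervalIntegral.abs_integral_le_integral_abs hab).trans
    (intervalIntegral.integral_mono_on hab (hW.continuousOn_mul (hg.sub hp.continuousOn)).abs
      ((hW.abs.continuousOn_mul (continuous_abs.pow (k + 1)).continuousOn).const_mul M)
      fun u hu => ?_)
  rw [abs_mul, ← mul_assoc]
  exact mul_le_mul_of_nonneg_right (hgc u hu) (abs_nonneg _)

end VanishingMoments

theorem taylorWithinEval_add_mul (f : ℝ → ℝ) (k : ℕ) (s : Set ℝ) (t h u : ℝ) :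
    taylorWithinEval f k s t (t + h * u) =
      ∑ i ∈ Finset.range (k + 1), iteratedDerivWithin i f s t * h ^ i / i.factorial * u ^ i := by
  rw [taylor_within_apply]
  refine Finset.sum_congr rfl fun i _ => ?_
  rw [smul_eq_mul, add_sub_cancel_left, mul_pow]
  ring

theorem stmt2 (k : ℕ) (W β : ℝ → ℝ) (t s L : ℝ) (hs : 0 < s) (hL : 0 ≤ L)
    (hW : IntegrableOn W (Set.Icc (-1 : ℝ) 1))
    (hmom : ∀ v : ℕ, v ≤ k → (∫ u in (-1 : ℝ)..1, u ^ v * W u) = 0)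
    (hβ : ContDiffOn ℝ k β (Set.Icc (t - s) (t + s)))
    (hLip : ∀ x ∈ Set.Icc (t - s) (t + s), ∀ y ∈ Set.Icc (t - s) (t + s),
      |iteratedDerivWithin k β (Set.Icc (t - s) (t + s)) x
        - iteratedDerivWithin k β (Set.Icc (t - s) (t + s)) y| ≤ L * |x - y|) :
    |∫ u in (-1 : ℝ)..1, β (t + s * u) * W u|
      ≤ (L / Nat.factorial k) * s ^ (k + 1) * ∫ u in (-1 : ℝ)..1, |u| ^ (k + 1) * |W u| := by
  set I := Icc (t - s) (t + s)
  have ht : t ∈ I := ⟨by linarith, by linarith⟩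
  have hmaps : MapsTo (fun u => t + s * u) (Icc (-1) 1) I := fun u ⟨hu₁, hu₂⟩ =>
    ⟨by nlinarith, by nlinarith⟩
  have hrem (u : ℝ) (hu : u ∈ Icc (-1) 1) :
      |β (t + s * u) - taylorWithinEval β k I t (t + s * u)|
        ≤ L / (k + 1).factorial * s ^ (k + 1) * |u| ^ (k + 1) := by
    have := (convex_Icc _ _).norm_sub_taylorWithinEval_le (uniqueDiffOn_Icc (by linarith)) hβ ht
      (fun y hy => hLip y hy t ht) (hmaps hu)
    rwa [Real.norm_eq_abs, add_sub_cancel_left, abs_mul, abs_of_pos hs, mul_pow, ← mul_assoc]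
      at this
  calc |∫ u in (-1 : ℝ)..1, β (t + s * u) * W u|
      ≤ L / (k + 1).factorial * s ^ (k + 1) * ∫ u in (-1 : ℝ)..1, |u| ^ (k + 1) * |W u| := by
        refine abs_integral_mul_le_of_moments_eq_zero
          (fun i => iteratedDerivWithin i β I t * s ^ i / i.factorial) (by norm_num)
          ((intervalIntegrable_iff_integrableOn_Icc_of_le (by norm_num)).2 hW) hmom
          (hβ.continuousOn.comp (by fun_prop) hmaps) fun u hu => ?_
        simpa only [taylorWithinEval_add_mul] using hrem u hu
    _ ≤ L / k.factorial * s ^ (k + 1) * ∫ u in (-1 : ℝ)..1, |u| ^ (k + 1) * |W u| := by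
        have hmass : 0 ≤ ∫ u in (-1 : ℝ)..1, |u| ^ (k + 1) * |W u| :=
          intervalIntegral.integral_nonneg (by norm_num) fun u _ => by positivity
        gcongr ?_ * _ * _
        exact div_le_div_of_nonneg_left hL (by positivity) (mod_cast Nat.factorial_le k.le_succ)
end

section
/- Let f ∈ L²([0,1]) satisfy ∫₀¹ f(x) dx = 1, ∫₀¹ x f(x) dx = 0, and ∫₀¹ x³ f(x) dx = 0. Then ∫₀¹ f(x)² dx ≥ 64/9. -/
/-!
Put `p x = 64/9 - 20 x + 140/9 x³`. The three constraints give `∫ p f = 64/9`, and `p` satisfies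
them itself, so also `∫ p² = 64/9`. Hence `0 ≤ ∫ (f - p)² = ∫ f² - 2 ∫ p f + ∫ p² = ∫ f² - 64/9`.
-/

open MeasureTheory Set

theorem integral_sq_le_integral_sq_of_integral_mul_eq {α : Type*} [MeasurableSpace α]
    {μ : Measure α} {f g : α → ℝ} (hf : MemLp f 2 μ) (hg : MemLp g 2 μ)
    (hgf : ∫ x, g x * f x ∂μ = ∫ x, g x ^ 2 ∂μ) :
    ∫ x, g x ^ 2 ∂μ ≤ ∫ x, f x ^ 2 ∂μ := by
  have hf2 := hf.integrable_sq
  have hg2 := hg.integrable_sq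
  have hgf2 : Integrable (fun x => 2 * (g x * f x)) μ := (hg.integrable_mul hf).const_mul 2
  have hdiff : Integrable (fun x => f x ^ 2 - 2 * (g x * f x)) μ := hf2.sub hgf2
  have expand : ∫ x, (f x - g x) ^ 2 ∂μ
      = ∫ x, f x ^ 2 ∂μ - 2 * ∫ x, g x * f x ∂μ + ∫ x, g x ^ 2 ∂μ := by
    rw [← integral_const_mul, ← integral_sub hf2 hgf2, ← integral_add hdiff hg2]
    congr 1 with x
    ring
  have hsq : 0 ≤ ∫ x, (f x - g x) ^ 2 ∂μ := integral_nonneg fun x => sq_nonneg (f x - g x)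
  linarith

theorem intervalIntegral_eq_setIntegral_Icc {f : ℝ → ℝ} {a b : ℝ} (hab : a ≤ b) :
    ∫ x in a..b, f x = ∫ x in Icc a b, f x := by
  rw [intervalIntegral.integral_of_le hab, integral_Icc_eq_integral_Ioc]

/-- The minimiser: its coefficients form the first column of the inverse of the Gram matrix of
`1, x, x³` on `[0, 1]`. -/
noncomputable def extremal (x : ℝ) : ℝ := 64 / 9 - 20 * x + 140 / 9 * x ^ 3

theorem continuous_extremal : Continuous extremal := by
  unfold extremal
  fun_prop

theorem memLp_two_extremal_Icc (a b : ℝ) : MemLp extremal 2 (volume.restrict (Icc a b)) :=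
  (memLp_two_iff_integrable_sq continuous_extremal.aestronglyMeasurable).2
    (continuous_extremal.pow 2).integrableOn_Icc

theorem integral_extremal_mul {μ : Measure ℝ} {K : Set ℝ} (hK : IsCompact K) {f : ℝ → ℝ}
    (hf : IntegrableOn f K μ) (h0 : ∫ x in K, f x ∂μ = 1) (h1 : ∫ x in K, x * f x ∂μ = 0)
    (h3 : ∫ x in K, x ^ 3 * f x ∂μ = 0) :
    ∫ x in K, extremal x * f x ∂μ = 64 / 9 := by
  have hf1 : IntegrableOn (fun x => x * f x) K μ := hf.continuousOn_mul continuousOn_id hK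
  have hf3 : IntegrableOn (fun x => x ^ 3 * f x) K μ :=
    hf.continuousOn_mul (continuousOn_id.pow 3) hK
  have hsplit : ∀ x, extremal x * f x
      = 64 / 9 * f x - 20 * (x * f x) + 140 / 9 * (x ^ 3 * f x) := fun x => by
    unfold extremal
    ring
  have hdiff : IntegrableOn (fun x => 64 / 9 * f x - 20 * (x * f x)) K μ :=
    (hf.const_mul _).sub (hf1.const_mul _)
  simp only [hsplit]
  rw [integral_add hdiff (hf3.const_mul _), integral_sub (hf.const_mul _) (hf1.const_mul _),
    integral_const_mul, integral_const_mul, integral_const_mul, h0, h1, h3]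
  norm_num

theorem integral_Icc_pow_mul_extremal (k : ℕ) :
    ∫ x in Icc (0 : ℝ) 1, x ^ k * extremal x
      = 64 / 9 / (k + 1) - 20 / (k + 2) + 140 / 9 / (k + 4) := by
  have hsplit : ∀ x : ℝ, x ^ k * extremal x
      = 64 / 9 * x ^ k - 20 * x ^ (k + 1) + 140 / 9 * x ^ (k + 3) := fun x => by
    unfold extremal
    ring
  rw [← intervalIntegral_eq_setIntegral_Icc zero_le_one]
  simp (disch := exact Continuous.intervalIntegrable (by fun_prop) _ _) only [hsplit,
    intervalIntegral.integral_add, intervalIntegral.integral_sub,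
    intervalIntegral.integral_const_mul, integral_pow]
  push_cast
  ring

theorem integral_Icc_extremal_sq : ∫ x in Icc (0 : ℝ) 1, extremal x ^ 2 = 64 / 9 := by
  simp only [sq]
  refine integral_extremal_mul isCompact_Icc continuous_extremal.integrableOn_Icc ?_ ?_ ?_
  · simpa using (integral_Icc_pow_mul_extremal 0).trans (by norm_num)
  · simpa using (integral_Icc_pow_mul_extremal 1).trans (by norm_num)
  · exact (integral_Icc_pow_mul_extremal 3).trans (by norm_num)

theorem stmt7 (f : ℝ → ℝ)
    (hf : MemLp f 2 (volume.restrict (Set.Icc (0 : ℝ) 1)))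
    (h0 : (∫ x in (0 : ℝ)..1, f x) = 1)
    (h1 : (∫ x in (0 : ℝ)..1, x * f x) = 0)
    (h3 : (∫ x in (0 : ℝ)..1, x ^ 3 * f x) = 0) :
    64 / 9 ≤ ∫ x in (0 : ℝ)..1, (f x) ^ 2 := by
  simp only [intervalIntegral_eq_setIntegral_Icc zero_le_one] at h0 h1 h3 ⊢
  have hpf : ∫ x in Icc (0 : ℝ) 1, extremal x * f x = 64 / 9 :=
    integral_extremal_mul isCompact_Icc (hf.integrable one_le_two) h0 h1 h3
  rw [← integral_Icc_extremal_sq]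
  exact integral_sq_le_integral_sq_of_integral_mul_eq hf (memLp_two_extremal_Icc 0 1)
    (hpf.trans integral_Icc_extremal_sq.symm)
end
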